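/- Suppose C is a Krull-Schmidt, Hom-finite, k-linear triangulated category with Auslander-Reiten triangles in which every indecomposable object has infinite shift orbit (M[i] ≇ M[j] for i ≠ j). Then the bilinear form ⟨[C],[D]⟩ = dim Hom(C,D) on the free abelian group A(C) on isomorphism classes of indecomposable objects is non-degenerate: if x ∈ A(C) satisfies ⟨x, [D]⟩ = 0 for all indecomposables D, then x = 0. -/

import Mathlib

/-!
For an Auslander–Reiten triangle `X ⟶ Y ⟶ Z ⟶ X⟦1⟧` and an indecomposable `W`, the long exact
sequence of `Hom(W, -)` writes `dim Hom(W, X) - dim Hom(W, Y) + dim Hom(W, Z)` as the sum of the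
ranks of the connecting maps `Hom(W, Z⟦-1⟧) ⟶ Hom(W, X)` and `Hom(W, Z) ⟶ Hom(W, X⟦1⟧)`. By the AR
property both kill every non-isomorphism, and over an algebraically closed field every map between
isomorphic indecomposables is a scalar multiple of an isomorphism plus a non-isomorphism; so the
ranks are `[W ≅ Z⟦-1⟧]` and `[W ≅ Z]`. Hence `⟨x, Ẑ⟩` is the sum of the coefficients of `[Z]` and
`[Z⟦-1⟧]` in `x`. If `x` pairs trivially with everything, its coefficients alternate in sign with
constant absolute value along each shift orbit; orbits being infinite and the support of `x`
finite, they all vanish.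
-/

open CategoryTheory Limits Pretriangulated Module
open scoped Classical

noncomputable section

universe v u

variable {k : Type} [Field k] [IsAlgClosed k]
variable {C : Type u} [Category.{v} C] [Preadditive C] [CategoryTheory.Linear k C]
  [HasZeroObject C] [HasBinaryBiproducts C] [HasFiniteBiproducts C]
  [HasShift C ℤ] [∀ n : ℤ, (CategoryTheory.shiftFunctor C n).Additive]
  [Pretriangulated C]
  [∀ X Y : C, FiniteDimensional k (X ⟶ Y)]

/-- An object is indecomposable if it is nonzero and admits no nontrivial
direct sum decomposition. -/
def Indec (W : C) : Prop :=
  ¬ IsZero W ∧ ∀ A B : C, Nonempty (W ≅ A ⊞ B) → IsZero A ∨ IsZero B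

/-- The Krull-Schmidt property: indecomposables have local endomorphism rings
and every object is a finite direct sum of indecomposables. -/
def KrullSchmidt : Prop :=
  (∀ W : C, Indec W → ∀ f : W ⟶ W, IsIso f ∨ IsIso (𝟙 W - f)) ∧
  (∀ X : C, ∃ (n : ℕ) (f : Fin n → C), (∀ i, Indec (f i)) ∧ Nonempty (X ≅ ⨁ f))

/-- An Auslander-Reiten triangle: a distinguished triangle with indecomposable
end terms, nonzero connecting map, such that every non-split-epi to the third
object factors through the middle (equivalently every non-split-mono out of the
first object factors through the middle). -/
def IsARTriangle (T : Triangle C) : Prop :=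
  (T ∈ distTriang C) ∧ Indec T.obj₁ ∧ Indec T.obj₃ ∧ T.mor₃ ≠ 0 ∧
  (∀ (W : C) (f : W ⟶ T.obj₃), (¬ ∃ s : T.obj₃ ⟶ W, s ≫ f = 𝟙 T.obj₃) →
    ∃ g : W ⟶ T.obj₂, g ≫ T.mor₂ = f) ∧
  (∀ (W : C) (f : T.obj₁ ⟶ W), (¬ ∃ s : W ⟶ T.obj₁, f ≫ s = 𝟙 T.obj₁) →
    ∃ g : T.obj₂ ⟶ W, T.mor₁ ≫ g = f)

/-- The set of isomorphism classes of indecomposable objects of `C`. -/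
abbrev IndecCls (C : Type u) [Category.{v} C] [Preadditive C] [HasZeroObject C]
    [HasBinaryBiproducts C] : Type u :=
  {x : _root_.Quotient (CategoryTheory.isIsomorphicSetoid C) // ∃ W : C, Indec W ∧ ⟦W⟧ = x}

/-- The Grothendieck group `A(C)`: the free abelian group on the isomorphism
classes of indecomposable objects of `C`, with only direct-sum relations. -/
abbrev GreenGroup (C : Type u) [Category.{v} C] [Preadditive C] [HasZeroObject C]
    [HasBinaryBiproducts C] : Type u :=
  FreeAbelianGroup (IndecCls C)

/-- The class `[W] ∈ A(C)` of an indecomposable object (and `0` otherwise). -/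
def cls (W : C) : GreenGroup C :=
  if h : Indec W then FreeAbelianGroup.of (⟨⟦W⟧, W, h, rfl⟩ : IndecCls C) else 0

/-- The bilinear form on `A(C)` extending `⟨[C],[D]⟩ = dim Hom(C,D)`. -/
def homPairing : GreenGroup C →+ GreenGroup C →+ ℤ :=
  FreeAbelianGroup.lift fun s : IndecCls C =>
    FreeAbelianGroup.lift fun t : IndecCls C =>
      (finrank k (Quotient.out (Subtype.val s) ⟶ Quotient.out (Subtype.val t)) : ℤ)

section Indecomposable

variable {C : Type*} [Category C] [Preadditive C]

theorem Indec.of_iso [HasBinaryBiproducts C] {W W' : C} (e : W ≅ W') (h : Indec W) : Indec W' :=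
  ⟨fun hz => h.1 (hz.of_iso e), fun A B ⟨e'⟩ => h.2 A B ⟨e.trans e'⟩⟩

/-- An idempotent of a local ring is `0` or `1`; for `e = f ≫ s` the value `0` would kill `𝟙 Z`. -/
theorem isIso_of_comp_eq_id_of_local {W Z : C} (hZ : ¬ IsZero Z)
    (hloc : ∀ g : W ⟶ W, IsIso g ∨ IsIso (𝟙 W - g)) {f : W ⟶ Z} {s : Z ⟶ W}
    (hs : s ≫ f = 𝟙 Z) : IsIso f := by
  let e : End W := f ≫ s
  have he : IsIdempotentElem e := by
    change (f ≫ s) ≫ f ≫ s = f ≫ s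
    rw [Category.assoc, reassoc_of% hs]
  rcases hloc e with h | h
  · have : f ≫ s = 𝟙 W :=
      (IsIdempotentElem.iff_eq_one_of_isUnit ((isUnit_iff_isIso e).2 h)).1 he
    exact ⟨s, this, hs⟩
  · have h0 : 1 - e = 1 :=
      (IsIdempotentElem.iff_eq_one_of_isUnit ((isUnit_iff_isIso (1 - e)).2 h)).1 he.one_sub
    refine absurd ((IsZero.iff_id_eq_zero Z).2 ?_) hZ
    calc 𝟙 Z = s ≫ (f ≫ s) ≫ f := by rw [Category.assoc, hs, Category.comp_id, hs]
      _ = 0 := by rw [show f ≫ s = 0 from sub_eq_self.1 h0, zero_comp, comp_zero]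

variable [HasShift C ℤ] [∀ n : ℤ, (shiftFunctor C n).Additive]

theorem isZero_of_isZero_shift {W : C} (n : ℤ) (h : IsZero (W⟦n⟧)) : IsZero W :=
  ((shiftFunctor C (-n)).map_isZero h).of_iso (shiftShiftNeg W n).symm

theorem Indec.shift [HasBinaryBiproducts C] {W : C} (h : Indec W) (n : ℤ) : Indec (W⟦n⟧) := by
  refine ⟨fun hz => h.1 (isZero_of_isZero_shift n hz), fun A B ⟨e⟩ => ?_⟩
  have := preservesBinaryBiproduct_of_preservesBiproduct (shiftFunctor C (-n)) A B
  have e' : W ≅ A⟦-n⟧ ⊞ B⟦-n⟧ :=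
    (shiftShiftNeg W n).symm ≪≫ (shiftFunctor C (-n)).mapIso e ≪≫
      (shiftFunctor C (-n)).mapBiprod A B
  exact (h.2 _ _ ⟨e'⟩).imp (isZero_of_isZero_shift _) (isZero_of_isZero_shift _)

end Indecomposable

theorem finrank_sub_finrank_add_finrank_of_exact {K A B C D E : Type*} [Field K]
    [AddCommGroup A] [AddCommGroup B] [AddCommGroup C] [AddCommGroup D] [AddCommGroup E]
    [Module K A] [Module K B] [Module K C] [Module K D] [Module K E]
    [FiniteDimensional K B] [FiniteDimensional K C] [FiniteDimensional K D]
    {f₁ : A →ₗ[K] B} {f₂ : B →ₗ[K] C} {f₃ : C →ₗ[K] D} {f₄ : D →ₗ[K] E}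
    (h₁₂ : Function.Exact f₁ f₂) (h₂₃ : Function.Exact f₂ f₃) (h₃₄ : Function.Exact f₃ f₄) :
    (finrank K B : ℤ) - finrank K C + finrank K D =
      finrank K (LinearMap.range f₁) + finrank K (LinearMap.range f₄) := by
  have hB := f₂.finrank_range_add_finrank_ker
  have hC := f₃.finrank_range_add_finrank_ker
  have hD := f₄.finrank_range_add_finrank_ker
  rw [LinearMap.exact_iff.1 h₁₂] at hB
  rw [LinearMap.exact_iff.1 h₂₃] at hC
  rw [LinearMap.exact_iff.1 h₃₄] at hD
  omega

theorem FreeAbelianGroup.coeff_of {X : Type*} (s t : X) :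
    FreeAbelianGroup.coeff t (FreeAbelianGroup.of s) = if s = t then 1 else 0 := by
  simp [FreeAbelianGroup.coeff, Finsupp.single_apply]

section Linear

variable {k : Type*} [Field k] {C : Type*} [Category C] [Preadditive C] [Linear k C]

/-- `c` is an eigenvalue of `f ≫ e.inv` in the nontrivial finite-dimensional `k`-algebra `End W`. -/
theorem exists_not_isIso_sub_smul [IsAlgClosed k] {W Z : C} [FiniteDimensional k (W ⟶ W)]
    (hW : ¬ IsZero W) (e : W ≅ Z) (f : W ⟶ Z) : ∃ c : k, ¬ IsIso (f - c • e.hom) := by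
  have : Nontrivial (End W) := ⟨⟨𝟙 W, 0, fun h => hW ((IsZero.iff_id_eq_zero W).2 h)⟩⟩
  have : FiniteDimensional k (End W) := ‹_›
  obtain ⟨c, hc⟩ := spectrum.nonempty_of_isAlgClosed_of_finiteDimensional k (End.of (f ≫ e.inv))
  refine ⟨c, fun hiso => spectrum.mem_iff.1 hc ?_⟩
  have : algebraMap k (End W) c - End.of (f ≫ e.inv) = -((f - c • e.hom) ≫ e.inv) := by
    simp [Algebra.algebraMap_eq_smul_one, Preadditive.sub_comp, End.one_def]
  rw [this]
  exact ((isUnit_iff_isIso _).2 inferInstance).neg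

theorem finrank_range_rightComp_eq_ite [IsAlgClosed k] {W Z V : C} [FiniteDimensional k (W ⟶ W)]
    (hW : ¬ IsZero W) {h : Z ⟶ V} (hh : h ≠ 0) (hfac : ∀ f : W ⟶ Z, ¬ IsIso f → f ≫ h = 0) :
    finrank k (LinearMap.range (Linear.rightComp k W h)) = if Nonempty (W ≅ Z) then 1 else 0 := by
  split_ifs with hiso
  · obtain ⟨e⟩ := hiso
    have hne : e.hom ≫ h ≠ 0 := fun h0 => hh (by simpa using e.inv ≫= h0)
    suffices LinearMap.range (Linear.rightComp k W h) = k ∙ (e.hom ≫ h) by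
      rw [this, finrank_span_singleton hne]
    refine le_antisymm ?_ ((Submodule.span_singleton_le_iff_mem _ _).2 ⟨e.hom, rfl⟩)
    rintro _ ⟨f, rfl⟩
    obtain ⟨c, hc⟩ := exists_not_isIso_sub_smul (k := k) hW e f
    have hf := hfac _ hc
    rw [Preadditive.sub_comp, sub_eq_zero, Linear.smul_comp] at hf
    exact Submodule.mem_span_singleton.2 ⟨c, hf.symm⟩
  · have : Linear.rightComp k W h = 0 := LinearMap.ext fun f => hfac f fun hf => hiso ⟨asIso f⟩
    rw [this, LinearMap.range_zero, finrank_bot]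

def homBiproductLinearEquiv (W : C) {J : Type*} [Fintype J] (f : J → C) [HasBiproduct f] :
    (W ⟶ ⨁ f) ≃ₗ[k] Π j, (W ⟶ f j) where
  toFun g j := g ≫ biproduct.π f j
  map_add' g h := by ext j; simp
  map_smul' c g := by ext j; simp
  invFun := biproduct.lift
  left_inv g := by ext; simp
  right_inv h := by ext; simp

theorem finrank_hom_biproduct (W : C) {J : Type*} [Fintype J] (f : J → C) [HasBiproduct f]
    [∀ j, FiniteDimensional k (W ⟶ f j)] :
    finrank k (W ⟶ ⨁ f) = ∑ j, finrank k (W ⟶ f j) := by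
  rw [(homBiproductLinearEquiv W f).finrank_eq, Module.finrank_pi_fintype]

end Linear

section Triangulated

variable {k : Type*} [Field k] {C : Type*} [Category C] [Preadditive C] [HasZeroObject C]
  [HasShift C ℤ] [∀ n : ℤ, (shiftFunctor C n).Additive] [Pretriangulated C]

theorem exact_rightComp_mor₁_mor₂ [Linear k C] {T : Triangle C} (hT : T ∈ distTriang C) (W : C) :
    Function.Exact (Linear.rightComp k W T.mor₁) (Linear.rightComp k W T.mor₂) := by
  intro g
  refine ⟨fun hg => ?_, ?_⟩
  · obtain ⟨f, hf⟩ := Triangle.coyoneda_exact₂ T hT g hg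
    exact ⟨f, hf.symm⟩
  · rintro ⟨f, rfl⟩
    simp [comp_distTriang_mor_zero₁₂ T hT]

variable [HasBinaryBiproducts C] {T : Triangle C}

theorem IsARTriangle.comp_mor₃_eq_zero (hT : IsARTriangle T) {W : C}
    (hloc : ∀ g : W ⟶ W, IsIso g ∨ IsIso (𝟙 W - g)) {f : W ⟶ T.obj₃} (hf : ¬ IsIso f) :
    f ≫ T.mor₃ = 0 := by
  have hns : ¬ ∃ s : T.obj₃ ⟶ W, s ≫ f = 𝟙 T.obj₃ := fun ⟨_, hs⟩ =>
    hf (isIso_of_comp_eq_id_of_local hT.2.2.1.1 hloc hs)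
  obtain ⟨g, rfl⟩ := hT.2.2.2.2.1 W f hns
  simp [comp_distTriang_mor_zero₂₃ T hT.1]

theorem IsARTriangle.comp_shift_map_mor₃_eq_zero (hT : IsARTriangle T) (n : ℤ) {W : C}
    (hloc : ∀ g : W⟦-n⟧ ⟶ W⟦-n⟧, IsIso g ∨ IsIso (𝟙 _ - g)) {f : W ⟶ T.obj₃⟦n⟧}
    (hf : ¬ IsIso f) : f ≫ T.mor₃⟦n⟧' = 0 := by
  let e := shiftFunctorCompIsoId C n (-n) (add_neg_cancel n)
  have hg : ¬ IsIso (f⟦-n⟧' ≫ e.hom.app T.obj₃) := fun _ => hf <| by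
    have : IsIso (f⟦-n⟧') := IsIso.of_isIso_comp_right _ (e.hom.app _)
    exact isIso_of_reflects_iso f (shiftFunctor C (-n))
  apply (shiftFunctor C (-n)).map_injective
  calc (f ≫ T.mor₃⟦n⟧')⟦-n⟧' = (f⟦-n⟧' ≫ e.hom.app _) ≫ T.mor₃ ≫ e.inv.app _ := by
        simp only [Functor.map_comp, shift_shift_neg', Category.assoc, e]
    _ = 0⟦-n⟧' := by
        rw [← Category.assoc, hT.comp_mor₃_eq_zero hloc hg, zero_comp, Functor.map_zero]

variable [Linear k C] [IsAlgClosed k]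

theorem IsARTriangle.finrank_range_rightComp_mor₃ (hT : IsARTriangle T) {W : C}
    [FiniteDimensional k (W ⟶ W)] (hW : ¬ IsZero W)
    (hloc : ∀ g : W ⟶ W, IsIso g ∨ IsIso (𝟙 W - g)) :
    finrank k (LinearMap.range (Linear.rightComp k W T.mor₃)) =
      if Nonempty (W ≅ T.obj₃) then 1 else 0 :=
  finrank_range_rightComp_eq_ite hW hT.2.2.2.1 fun _ hf => hT.comp_mor₃_eq_zero hloc hf

theorem IsARTriangle.finrank_range_rightComp_invRotate_mor₁ (hT : IsARTriangle T) {W : C}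
    [FiniteDimensional k (W ⟶ W)] (hW : ¬ IsZero W)
    (hloc : ∀ g : W⟦-(-1 : ℤ)⟧ ⟶ W⟦-(-1 : ℤ)⟧, IsIso g ∨ IsIso (𝟙 _ - g)) :
    finrank k (LinearMap.range (Linear.rightComp k W T.invRotate.mor₁)) =
      if Nonempty (W ≅ T.obj₃⟦(-1 : ℤ)⟧) then 1 else 0 := by
  refine finrank_range_rightComp_eq_ite hW (fun h0 => hT.2.2.2.1 ?_)
    fun (f : W ⟶ T.obj₃⟦(-1 : ℤ)⟧) hf => ?_
  · change -(T.mor₃⟦(-1 : ℤ)⟧' ≫ (shiftFunctorCompIsoId C (1 : ℤ) (-1) _).hom.app T.obj₁) = 0 at h0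
    rwa [neg_eq_zero, Preadditive.IsIso.comp_right_eq_zero, Functor.map_eq_zero_iff] at h0
  · change f ≫ (-(T.mor₃⟦(-1 : ℤ)⟧' ≫ (shiftFunctorCompIsoId C (1 : ℤ) (-1) _).hom.app T.obj₁)) = 0
    rw [Preadditive.comp_neg, ← Category.assoc, hT.comp_shift_map_mor₃_eq_zero (-1) hloc hf,
      zero_comp, neg_zero]

theorem IsARTriangle.finrank_hom_sub_add [∀ X Y : C, FiniteDimensional k (X ⟶ Y)]
    (hloc : ∀ V : C, Indec V → ∀ g : V ⟶ V, IsIso g ∨ IsIso (𝟙 V - g))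
    (hT : IsARTriangle T) {W : C} (hW : Indec W) :
    (finrank k (W ⟶ T.obj₁) : ℤ) - finrank k (W ⟶ T.obj₂) + finrank k (W ⟶ T.obj₃) =
      (if Nonempty (W ≅ T.obj₃) then 1 else 0) +
        (if Nonempty (W ≅ T.obj₃⟦(-1 : ℤ)⟧) then 1 else 0) := by
  have h : (finrank k (W ⟶ T.obj₁) : ℤ) - finrank k (W ⟶ T.obj₂) + finrank k (W ⟶ T.obj₃) =
      finrank k (LinearMap.range (Linear.rightComp k W T.invRotate.mor₁)) +
        finrank k (LinearMap.range (Linear.rightComp k W T.mor₃)) :=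
    finrank_sub_finrank_add_finrank_of_exact
      (exact_rightComp_mor₁_mor₂ (inv_rot_of_distTriang T hT.1) W)
      (exact_rightComp_mor₁_mor₂ hT.1 W) (exact_rightComp_mor₁_mor₂ (rot_of_distTriang T hT.1) W)
  rw [h, hT.finrank_range_rightComp_invRotate_mor₁ hW.1 (hloc _ (hW.shift _)),
    hT.finrank_range_rightComp_mor₃ hW.1 (hloc _ hW), add_comm]
  push_cast
  rfl

end Triangulated

section GreenGroup

variable {C : Type*} [Category C] [Preadditive C] [HasZeroObject C] [HasBinaryBiproducts C]

def IndecCls.of (W : C) (h : Indec W) : IndecCls C := ⟨⟦W⟧, W, h, rfl⟩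

theorem IndecCls.of_eq_of_iff {W W' : C} (h : Indec W) (h' : Indec W') :
    IndecCls.of W h = IndecCls.of W' h' ↔ Nonempty (W ≅ W') :=
  Subtype.ext_iff.trans Quotient.eq

theorem IndecCls.indec_out (s : IndecCls C) : Indec s.val.out := by
  obtain ⟨W, hW, hs⟩ := s.2
  obtain ⟨e⟩ : Nonempty ((⟦W⟧ : Quotient (isIsomorphicSetoid C)).out ≅ W) :=
    Quotient.mk_out (s := isIsomorphicSetoid C) W
  exact hW.of_iso (hs ▸ e.symm)

theorem IndecCls.eq_of_iff_out (s : IndecCls C) {W : C} (hW : Indec W) :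
    s = IndecCls.of W hW ↔ Nonempty (s.val.out ≅ W) := by
  rw [← IndecCls.of_eq_of_iff s.indec_out hW]
  exact iff_of_eq (congrArg (· = _) (Subtype.ext (Quotient.out_eq _)).symm)

theorem cls_of_indec {W : C} (h : Indec W) : cls W = FreeAbelianGroup.of (IndecCls.of W h) :=
  dif_pos h

/-- The element `Ẑ = [Z] + [X] - [Y]` for `T = X ⟶ Y ⟶ Z ⟶ X⟦1⟧` and `Y ≅ ⨁ Ys`. -/
def arRelation [HasShift C ℤ] (T : Triangle C) {J : Type*} [Fintype J] (Ys : J → C) :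
    GreenGroup C :=
  cls T.obj₁ - ∑ j, cls (Ys j) + cls T.obj₃

variable {k : Type} [Field k] [Linear k C]

theorem homPairing_of_cls (s : IndecCls C) {D : C} (hD : Indec D) :
    homPairing (k := k) (FreeAbelianGroup.of s) (cls D) = finrank k (s.val.out ⟶ D) := by
  rw [cls_of_indec hD, homPairing, FreeAbelianGroup.lift_apply_of, FreeAbelianGroup.lift_apply_of]
  obtain ⟨e⟩ : Nonempty ((⟦D⟧ : Quotient (isIsomorphicSetoid C)).out ≅ D) :=
    Quotient.mk_out (s := isIsomorphicSetoid C) D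
  exact congrArg _ (Linear.homCongr k (Iso.refl _) e).finrank_eq

end GreenGroup

section AuslanderReiten

variable {k : Type} [Field k] [IsAlgClosed k] {C : Type*} [Category C] [Preadditive C]
  [Linear k C] [HasZeroObject C] [HasBinaryBiproducts C] [HasShift C ℤ]
  [∀ n : ℤ, (shiftFunctor C n).Additive] [Pretriangulated C]
  [∀ X Y : C, FiniteDimensional k (X ⟶ Y)]

theorem homPairing_arRelation (hloc : ∀ W : C, Indec W → ∀ f : W ⟶ W, IsIso f ∨ IsIso (𝟙 W - f))
    {T : Triangle C} (hT : IsARTriangle T) {J : Type*} [Fintype J] {Ys : J → C} [HasBiproduct Ys]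
    (hYs : ∀ j, Indec (Ys j)) (eY : T.obj₂ ≅ ⨁ Ys) (x : GreenGroup C) :
    homPairing (k := k) x (arRelation T Ys) =
      FreeAbelianGroup.coeff (IndecCls.of T.obj₃ hT.2.2.1) x +
        FreeAbelianGroup.coeff (IndecCls.of (T.obj₃⟦(-1 : ℤ)⟧) (hT.2.2.1.shift (-1))) x := by
  suffices (homPairing (k := k)).flip (arRelation T Ys) =
      FreeAbelianGroup.coeff (IndecCls.of T.obj₃ hT.2.2.1) +
        FreeAbelianGroup.coeff (IndecCls.of (T.obj₃⟦(-1 : ℤ)⟧) (hT.2.2.1.shift (-1))) from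
    DFunLike.congr_fun this x
  ext s
  have hY : ∑ j, homPairing (k := k) (FreeAbelianGroup.of s) (cls (Ys j)) =
      finrank k (s.val.out ⟶ T.obj₂) := by
    rw [(Linear.homCongr k (Iso.refl _) eY).finrank_eq, finrank_hom_biproduct, Nat.cast_sum]
    exact Finset.sum_congr rfl fun j _ => homPairing_of_cls s (hYs j)
  simp only [AddMonoidHom.flip_apply, AddMonoidHom.add_apply, AddMonoidHom.sub_apply,
    AddMonoidHom.finsetSum_apply, arRelation, map_add, map_sub, map_sum, hY,
    homPairing_of_cls s hT.2.1, homPairing_of_cls s hT.2.2.1, FreeAbelianGroup.coeff_of,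
    IndecCls.eq_of_iff_out]
  exact hT.finrank_hom_sub_add hloc s.indec_out

theorem coeff_add_coeff_shift_eq_zero [HasFiniteBiproducts C] (hKS : KrullSchmidt (C := C))
    (hAR : ∀ Z : C, Indec Z → ∃ T : Triangle C, IsARTriangle T ∧ Nonempty (T.obj₃ ≅ Z))
    {x : GreenGroup C} (hx : ∀ D : C, Indec D → homPairing (k := k) x (cls D) = 0)
    (Z : C) (hZ : Indec Z) :
    FreeAbelianGroup.coeff (IndecCls.of Z hZ) x +
      FreeAbelianGroup.coeff (IndecCls.of (Z⟦(-1 : ℤ)⟧) (hZ.shift (-1))) x = 0 := by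
  obtain ⟨T, hT, ⟨eZ⟩⟩ := hAR Z hZ
  obtain ⟨n, Ys, hYs, ⟨eY⟩⟩ := hKS.2 T.obj₂
  have h := homPairing_arRelation (k := k) hKS.1 hT hYs eY x
  rw [arRelation, map_add, map_sub, map_sum, hx _ hT.2.1, hx _ hT.2.2.1,
    Finset.sum_eq_zero fun j _ => hx _ (hYs j), sub_zero, add_zero] at h
  have e₁ : IndecCls.of T.obj₃ hT.2.2.1 = IndecCls.of Z hZ := (IndecCls.of_eq_of_iff _ _).2 ⟨eZ⟩
  have e₂ : IndecCls.of (T.obj₃⟦(-1 : ℤ)⟧) (hT.2.2.1.shift (-1)) =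
      IndecCls.of (Z⟦(-1 : ℤ)⟧) (hZ.shift (-1)) :=
    (IndecCls.of_eq_of_iff _ _).2 ⟨(shiftFunctor C (-1)).mapIso eZ⟩
  rw [← e₁, ← e₂, ← h]

end AuslanderReiten

section ShiftOrbit

variable {C : Type*} [Category C] [Preadditive C] [HasZeroObject C] [HasBinaryBiproducts C]
  [HasShift C ℤ] [∀ n : ℤ, (shiftFunctor C n).Additive]

open FreeAbelianGroup

theorem coeff_shift_neg_natCast_eq {x : GreenGroup C}
    (hx : ∀ (Z : C) (hZ : Indec Z),
      coeff (IndecCls.of Z hZ) x + coeff (IndecCls.of (Z⟦(-1 : ℤ)⟧) (hZ.shift (-1))) x = 0)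
    {W : C} (hW : Indec W) (n : ℕ) :
    coeff (IndecCls.of (W⟦-(n : ℤ)⟧) (hW.shift _)) x = (-1) ^ n * coeff (IndecCls.of W hW) x := by
  induction n with
  | zero =>
    have : IndecCls.of (W⟦-((0 : ℕ) : ℤ)⟧) (hW.shift _) = IndecCls.of W hW :=
      (IndecCls.of_eq_of_iff _ _).2 ⟨(shiftFunctorZero' C _ (by simp)).app W⟩
    rw [this, pow_zero, one_mul]
  | succ n ih =>
    have h := hx _ (hW.shift (-(n : ℤ)))
    have e : IndecCls.of (W⟦-(n : ℤ)⟧⟦(-1 : ℤ)⟧) ((hW.shift _).shift (-1)) =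
        IndecCls.of (W⟦-((n + 1 : ℕ) : ℤ)⟧) (hW.shift _) :=
      (IndecCls.of_eq_of_iff _ _).2
        ⟨(shiftAdd W _ _).symm ≪≫ eqToIso (by rw [Nat.cast_succ, neg_add])⟩
    rw [e, ih] at h
    rw [pow_succ]
    linarith

theorem eq_zero_of_coeff_add_coeff_shift_eq_zero
    (hinf : ∀ W : C, Indec W → ∀ i j : ℤ, Nonempty (W⟦i⟧ ≅ W⟦j⟧) → i = j) {x : GreenGroup C}
    (hx : ∀ (Z : C) (hZ : Indec Z),
      coeff (IndecCls.of Z hZ) x + coeff (IndecCls.of (Z⟦(-1 : ℤ)⟧) (hZ.shift (-1))) x = 0) :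
    x = 0 := by
  rw [← support_eq_empty, Finset.eq_empty_iff_forall_notMem]
  intro t ht
  obtain ⟨W, hW, hWt⟩ := t.2
  have ht : coeff (IndecCls.of W hW) x ≠ 0 :=
    (Subtype.ext hWt : IndecCls.of W hW = t) ▸ (mem_support_iff _ _).1 ht
  let orbit : ℕ → IndecCls C := fun n => IndecCls.of (W⟦-(n : ℤ)⟧) (hW.shift _)
  have horbit : Function.Injective orbit := fun m n hmn => by
    have := hinf W hW _ _ ((IndecCls.of_eq_of_iff _ _).1 hmn)
    omega
  have hmem : ∀ n, orbit n ∈ (x.support : Set (IndecCls C)) := fun n => by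
    simp [orbit, mem_support_iff, coeff_shift_neg_natCast_eq hx hW n, ht]
  exact Set.infinite_of_injective_forall_mem horbit hmem x.support.finite_toSet

end ShiftOrbit

/-- if `C` has Auslander-Reiten triangles and every indecomposable
has infinite shift orbit, then the bilinear form `⟨[C],[D]⟩ = dim Hom(C,D)` on
`A(C)` is non-degenerate. -/
theorem stmt5 (hKS : KrullSchmidt (C := C))
    (hAR : ∀ Z : C, Indec Z → ∃ T : Triangle C, IsARTriangle T ∧ Nonempty (T.obj₃ ≅ Z))
    (hinf : ∀ W : C, Indec W → ∀ i j : ℤ, Nonempty (W⟦i⟧ ≅ W⟦j⟧) → i = j)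
    (x : GreenGroup C)
    (hx : ∀ D : C, Indec D → homPairing (k := k) x (cls D) = 0) :
    x = 0 :=
  eq_zero_of_coeff_add_coeff_shift_eq_zero hinf (coeff_add_coeff_shift_eq_zero hKS hAR hx)
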